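/- (Smallness of derivative jumps under optimal L∞ convergence) Let p ≥ 0 be an integer. There exists a constant c > 0 depending only on p with the following property. Let a < b, N a positive integer, h = (b−a)/N, x_i = a + i h, u : [a,b] → ℝ (p+1)-times continuously differentiable, and u^R : (a,b) → ℝ piecewise polynomial of degree at most p on the cells (x_i, x_{i+1}). Let J^k_i = u^{R(k)}(x_i⁺) − u^{R(k)}(x_i⁻) for 1 ≤ i ≤ N−1 and 0 ≤ k ≤ p. If K ≥ 0 and sup_{x ∈ (a,b)} |u(x) − u^R(x)| ≤ K h^{p+1}, then for all such i and k, |J^k_i| ≤ c ( K + sup_{[a,b]} |u^{(p+1)}| ) h^{p+1−k}. -/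

import Mathlib

/-!
Near an interior node `x`, the Taylor polynomial `T` of degree `p` of `u` on `[x - h, x + h]` is
`M (2h)^(p+1) / p!`-close to `u`, where `M = sup |u^(p+1)|`. On each of the two cells adjacent to
`x`, the polynomial piece `q` of `u^R` is `K h^(p+1)`-close to `u`, so `q - T` is a polynomial of
degree `≤ p` of size `O((K + M) h^(p+1))` on an interval of length `h`. On polynomials of degree
`≤ p`, all norms are equivalent (here made explicit by Lagrange interpolation at `p + 1` points
of `(0, 1)`). Hence rescaling that interval to `(0, 1)` bounds `h^k |(q - T)^(k)(x)|` by the same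
quantity, and the jump `J^k` is the difference of the two one-sided values.
-/

open Polynomial Set Finset Nat

lemma add_mul_mem_uIoo {x y t : ℝ} (hxy : x ≠ y) (ht : t ∈ Ioo (0 : ℝ) 1) :
    x + (y - x) * t ∈ uIoo x y := by
  obtain ⟨ht0, ht1⟩ := ht
  rcases hxy.lt_or_gt with h | h
  · rw [uIoo_of_le h.le]; constructor <;> nlinarith
  · rw [uIoo_of_ge h.le]; constructor <;> nlinarith

noncomputable def unitNode (p j : ℕ) : ℝ := (j + 1) / (p + 2)

lemma unitNode_mem_Ioo {p j : ℕ} (hj : j < p + 1) : unitNode p j ∈ Ioo (0 : ℝ) 1 := by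
  have hj' : (j : ℝ) + 1 < p + 2 := by norm_cast; omega
  exact ⟨by unfold unitNode; positivity, by rw [unitNode, div_lt_one (by positivity)]; exact hj'⟩

lemma unitNode_injective (p : ℕ) : Function.Injective (unitNode p) := by
  intro i j hij
  simpa [unitNode, div_left_inj' (show (p : ℝ) + 2 ≠ 0 by positivity)] using hij

namespace Polynomial

theorem iterate_derivative_comp_C_mul_X_add_C {R : Type*} [CommSemiring R] (r : R[X]) (m c : R) :
    ∀ k : ℕ, derivative^[k] (r.comp (C m * X + C c)) =
      C (m ^ k) * (derivative^[k] r).comp (C m * X + C c)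
  | 0 => by simp
  | k + 1 => by
    rw [Function.iterate_succ_apply', iterate_derivative_comp_C_mul_X_add_C r m c k,
      derivative_C_mul, derivative_comp, Function.iterate_succ_apply']
    simp only [derivative_add, derivative_C, derivative_C_mul_X, add_zero, pow_succ, C_mul]
    ring

/-- Lagrange interpolation at the nodes `unitNode p j` writes `s^(k)(0)` as a linear combination of
the values `s (unitNode p j)`; this is the sum of the absolute coefficients over all `k ≤ p`. -/
noncomputable def derivAtZeroBound (p : ℕ) : ℝ :=
  ∑ k ∈ range (p + 1), ∑ j ∈ range (p + 1),
    |(derivative^[k] (Lagrange.basis (range (p + 1)) (unitNode p) j)).eval 0|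

lemma one_le_derivAtZeroBound (p : ℕ) : 1 ≤ derivAtZeroBound p := by
  have hpart : 1 ≤ ∑ j ∈ range (p + 1),
      |(Lagrange.basis (range (p + 1)) (unitNode p) j).eval 0| := by
    calc (1 : ℝ)
        = |(∑ j ∈ range (p + 1), Lagrange.basis (range (p + 1)) (unitNode p) j).eval 0| := by
          rw [Lagrange.sum_basis (unitNode_injective p).injOn nonempty_range_add_one]; simp
      _ ≤ _ := by rw [eval_finsetSum]; exact abs_sum_le_sum_abs _ _
  refine hpart.trans ?_
  exact single_le_sum (f := fun k => ∑ j ∈ range (p + 1),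
      |(derivative^[k] (Lagrange.basis (range (p + 1)) (unitNode p) j)).eval 0|)
    (fun _ _ => sum_nonneg fun _ _ => abs_nonneg _) (mem_range.2 p.succ_pos)

theorem abs_iterate_derivative_eval_zero_le {p k : ℕ} {s : ℝ[X]} {ε : ℝ} (hs : s.natDegree ≤ p)
    (hε : ∀ x ∈ Ioo (0 : ℝ) 1, |s.eval x| ≤ ε) (hk : k ≤ p) :
    |(derivative^[k] s).eval 0| ≤ derivAtZeroBound p * ε := by
  set b := Lagrange.basis (range (p + 1)) (unitNode p)
  have hε0 : 0 ≤ ε := (abs_nonneg _).trans (hε _ (unitNode_mem_Ioo p.succ_pos))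
  have hdeg : s.degree < #(range (p + 1)) := by
    rw [card_range]
    exact (degree_le_of_natDegree_le hs).trans_lt (by exact_mod_cast p.lt_succ_self)
  have hinterp : s = ∑ j ∈ range (p + 1), C (s.eval (unitNode p j)) * b j :=
    Lagrange.eq_interpolate (unitNode_injective p).injOn hdeg
  calc |(derivative^[k] s).eval 0|
      = |∑ j ∈ range (p + 1), s.eval (unitNode p j) * (derivative^[k] (b j)).eval 0| := by
        conv_lhs => rw [hinterp]
        simp [iterate_derivative_sum, iterate_derivative_C_mul, eval_finsetSum]
    _ ≤ ∑ j ∈ range (p + 1), ε * |(derivative^[k] (b j)).eval 0| := by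
        refine (abs_sum_le_sum_abs _ _).trans (sum_le_sum fun j hj => ?_)
        rw [abs_mul]
        exact mul_le_mul_of_nonneg_right (hε _ (unitNode_mem_Ioo (mem_range.1 hj))) (abs_nonneg _)
    _ = (∑ j ∈ range (p + 1), |(derivative^[k] (b j)).eval 0|) * ε := by
        rw [← mul_sum, mul_comm]
    _ ≤ derivAtZeroBound p * ε := by
        refine mul_le_mul_of_nonneg_right ?_ hε0
        exact single_le_sum (f := fun k => ∑ j ∈ range (p + 1), |(derivative^[k] (b j)).eval 0|)
          (fun _ _ => sum_nonneg fun _ _ => abs_nonneg _) (mem_range.2 (Nat.lt_succ_of_le hk))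

theorem pow_mul_abs_iterate_derivative_eval_le {p k : ℕ} {r : ℝ[X]} {x y ε : ℝ}
    (hr : r.natDegree ≤ p) (hxy : x ≠ y) (hε : ∀ z ∈ uIoo x y, |r.eval z| ≤ ε) (hk : k ≤ p) :
    |y - x| ^ k * |(derivative^[k] r).eval x| ≤ derivAtZeroBound p * ε := by
  set L : ℝ[X] := C (y - x) * X + C x
  have hs : (r.comp L).natDegree ≤ p :=
    natDegree_comp_le.trans ((Nat.mul_le_mul hr natDegree_linear_le).trans (mul_one p).le)
  have hsε : ∀ t ∈ Ioo (0 : ℝ) 1, |(r.comp L).eval t| ≤ ε := fun t ht => by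
    simpa [L, add_comm] using hε _ (add_mul_mem_uIoo hxy ht)
  have hscale : (derivative^[k] (r.comp L)).eval 0 = (y - x) ^ k * (derivative^[k] r).eval x := by
    rw [iterate_derivative_comp_C_mul_X_add_C]
    simp
  simpa [hscale, abs_mul, abs_pow] using abs_iterate_derivative_eval_zero_le hs hsε hk

lemma pow_mul_abs_iterate_derivative_sub_eval_le {p k : ℕ} {u : ℝ → ℝ} {q T : ℝ[X]} {x y ε δ : ℝ}
    (hq : q.natDegree ≤ p) (hT : T.natDegree ≤ p) (hxy : x ≠ y)
    (hε : ∀ z ∈ uIoo x y, |u z - q.eval z| ≤ ε) (hδ : ∀ z ∈ uIoo x y, |u z - T.eval z| ≤ δ)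
    (hk : k ≤ p) :
    |y - x| ^ k * |(derivative^[k] (q - T)).eval x| ≤ derivAtZeroBound p * (ε + δ) := by
  refine pow_mul_abs_iterate_derivative_eval_le ((natDegree_sub_le _ _).trans (max_le hq hT))
    hxy (fun z hz => ?_) hk
  rw [eval_sub, show q.eval z - T.eval z = (u z - T.eval z) - (u z - q.eval z) by ring]
  linarith [abs_sub (u z - T.eval z) (u z - q.eval z), hε z hz, hδ z hz]

theorem pow_mul_abs_jump_le {p k : ℕ} {u : ℝ → ℝ} {qₗ qᵣ T : ℝ[X]} {x h ε δ : ℝ} (hh : 0 < h)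
    (hqₗ : qₗ.natDegree ≤ p) (hqᵣ : qᵣ.natDegree ≤ p) (hT : T.natDegree ≤ p)
    (hεₗ : ∀ z ∈ Ioo (x - h) x, |u z - qₗ.eval z| ≤ ε)
    (hεᵣ : ∀ z ∈ Ioo x (x + h), |u z - qᵣ.eval z| ≤ ε)
    (hδ : ∀ z ∈ Ioo (x - h) (x + h), |u z - T.eval z| ≤ δ) (hk : k ≤ p) :
    h ^ k * |(derivative^[k] qᵣ).eval x - (derivative^[k] qₗ).eval x| ≤
      2 * derivAtZeroBound p * (ε + δ) := by
  have hIooᵣ : uIoo x (x + h) = Ioo x (x + h) := uIoo_of_le (by linarith)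
  have hIooₗ : uIoo x (x - h) = Ioo (x - h) x := uIoo_of_ge (by linarith)
  have hᵣ := pow_mul_abs_iterate_derivative_sub_eval_le hqᵣ hT (by linarith) (hIooᵣ ▸ hεᵣ)
    (fun z hz => hδ z (Ioo_subset_Ioo_left (sub_le_self x hh.le) (hIooᵣ ▸ hz))) hk
  have hₗ := pow_mul_abs_iterate_derivative_sub_eval_le hqₗ hT (by linarith) (hIooₗ ▸ hεₗ)
    (fun z hz => hδ z (Ioo_subset_Ioo_right (le_add_of_nonneg_right hh.le) (hIooₗ ▸ hz))) hk
  rw [show x + h - x = h by ring, abs_of_pos hh] at hᵣ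
  rw [show x - h - x = -h by ring, abs_neg, abs_of_pos hh] at hₗ
  simp only [iterate_derivative_sub, eval_sub] at hᵣ hₗ
  have hjump := abs_sub ((derivative^[k] qᵣ).eval x - (derivative^[k] T).eval x)
    ((derivative^[k] qₗ).eval x - (derivative^[k] T).eval x)
  rw [sub_sub_sub_cancel_right] at hjump
  nlinarith [pow_pos hh k]

end Polynomial

theorem exists_natDegree_le_eval_eq_taylorWithinEval (f : ℝ → ℝ) (n : ℕ) (s : Set ℝ) (x₀ : ℝ) :
    ∃ T : ℝ[X], T.natDegree ≤ n ∧ ∀ x, T.eval x = taylorWithinEval f n s x₀ x := by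
  refine ⟨∑ j ∈ range (n + 1), C (iteratedDerivWithin j f s x₀ / j !) * (X - C x₀) ^ j, ?_, ?_⟩
  · refine natDegree_sum_le_of_forall_le _ _ fun j hj => (natDegree_C_mul_le _ _).trans ?_
    rw [natDegree_pow, natDegree_X_sub_C, mul_one]
    exact Nat.lt_succ_iff.1 (mem_range.1 hj)
  · intro x
    rw [taylor_within_apply, eval_finsetSum]
    refine sum_congr rfl fun j _ => ?_
    simp only [eval_mul, eval_C, eval_pow, eval_sub, eval_X, smul_eq_mul]
    ring

theorem exists_polynomial_abs_sub_le_of_contDiffOn {u : ℝ → ℝ} {a b α β M : ℝ} {n : ℕ}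
    (hu : ContDiffOn ℝ (n + 1) u (Icc a b))
    (hM : ∀ y ∈ Icc a b, |iteratedDerivWithin (n + 1) u (Icc a b) y| ≤ M)
    (hαβ : α < β) (hsub : Icc α β ⊆ Icc a b) :
    ∃ T : ℝ[X], T.natDegree ≤ n ∧
      ∀ x ∈ Icc α β, |u x - T.eval x| ≤ M * (β - α) ^ (n + 1) / n ! := by
  have hab : a < b :=
    (hsub (left_mem_Icc.2 hαβ.le)).1.trans_lt (hαβ.trans_le (hsub (right_mem_Icc.2 hαβ.le)).2)
  have hM' : ∀ y ∈ Icc α β, ‖iteratedDerivWithin (n + 1) u (Icc α β) y‖ ≤ M := fun y hy => by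
    rw [Real.norm_eq_abs, iteratedDerivWithin_eq_iteratedFDerivWithin,
      iteratedFDerivWithin_subset hsub (uniqueDiffOn_Icc hαβ) (uniqueDiffOn_Icc hab) hu hy,
      ← iteratedDerivWithin_eq_iteratedFDerivWithin]
    exact hM y (hsub hy)
  have hM0 : 0 ≤ M := (abs_nonneg _).trans (hM _ (hsub (left_mem_Icc.2 hαβ.le)))
  obtain ⟨T, hT, hTeval⟩ := exists_natDegree_le_eval_eq_taylorWithinEval u n (Icc α β) α
  refine ⟨T, hT, fun x hx => ?_⟩
  have hrem := taylor_mean_remainder_bound hαβ.le (hu.mono hsub) hx hM'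
  rw [Real.norm_eq_abs, ← hTeval] at hrem
  refine hrem.trans ?_
  gcongr
  · linarith [hx.1]
  · exact hx.2

lemma exists_eq_or_mem_Ioo_of_mem_Ico {a h x : ℝ} {N : ℕ} (hh : 0 < h)
    (hx : x ∈ Ico a (a + N * h)) :
    ∃ j < N, x = a + j * h ∨ x ∈ Ioo (a + j * h) (a + (j + 1) * h) := by
  have ht : 0 ≤ (x - a) / h := div_nonneg (by linarith [hx.1]) hh.le
  have htN : (x - a) / h < N := by rw [div_lt_iff₀ hh]; linarith [hx.2]
  refine ⟨⌊(x - a) / h⌋₊, (Nat.floor_lt ht).2 htN, ?_⟩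
  have hlo : a + ⌊(x - a) / h⌋₊ * h ≤ x := by
    have := mul_le_mul_of_nonneg_right (Nat.floor_le ht) hh.le
    rw [div_mul_cancel₀ _ hh.ne'] at this
    linarith
  have hhi : x < a + (⌊(x - a) / h⌋₊ + 1) * h := by
    have := mul_lt_mul_of_pos_right (Nat.lt_floor_add_one ((x - a) / h)) hh
    rw [div_mul_cancel₀ _ hh.ne'] at this
    linarith
  rcases hlo.eq_or_lt with heq | hlt
  · exact Or.inl heq.symm
  · exact Or.inr ⟨hlt, hhi⟩

theorem isBounded_image_of_eqOn_polynomial {f : ℝ → ℝ} {q : ℕ → ℝ[X]} {a h : ℝ} {N : ℕ}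
    (hh : 0 < h) (hf : ∀ j < N, ∀ x ∈ Ioo (a + j * h) (a + (j + 1) * h), f x = (q j).eval x) :
    Bornology.IsBounded (f '' Ioo a (a + N * h)) := by
  have hcover : f '' Ioo a (a + N * h) ⊆
      (⋃ j ∈ range N, (fun x => (q j).eval x) '' Icc (a + j * h) (a + (j + 1) * h)) ∪
        (fun j : ℕ => f (a + j * h)) '' ↑(range N) := by
    rintro _ ⟨x, hx, rfl⟩
    obtain ⟨j, hj, hnode | hcell⟩ := exists_eq_or_mem_Ioo_of_mem_Ico hh (Ioo_subset_Ico_self hx)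
    · exact Or.inr ⟨j, by simpa using hj, hnode ▸ rfl⟩
    · refine Or.inl (mem_biUnion (mem_range.2 hj) ⟨x, Ioo_subset_Icc_self hcell, ?_⟩)
      exact (hf j hj x hcell).symm
  refine Bornology.IsBounded.subset (Bornology.IsBounded.union ?_ ?_) hcover
  · exact (Bornology.isBounded_biUnion_finset _).2 fun j _ =>
      (isCompact_Icc.image (q j).continuous).isBounded
  · exact ((range N).finite_toSet.image _).isBounded

lemma bddAbove_abs_sub_image {f g : ℝ → ℝ} {s : Set ℝ}
    (hf : Bornology.IsBounded (f '' s)) (hg : Bornology.IsBounded (g '' s)) :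
    BddAbove ((fun x => |f x - g x|) '' s) := by
  obtain ⟨Cf, hCf⟩ := isBounded_iff_forall_norm_le.1 hf
  obtain ⟨Cg, hCg⟩ := isBounded_iff_forall_norm_le.1 hg
  refine ⟨Cf + Cg, ?_⟩
  rintro _ ⟨x, hx, rfl⟩
  have hfx := hCf _ (mem_image_of_mem f hx)
  have hgx := hCg _ (mem_image_of_mem g hx)
  rw [Real.norm_eq_abs] at hfx hgx
  linarith [abs_sub (f x) (g x)]

theorem abs_sub_eval_le_of_sSup_le {u uR : ℝ → ℝ} {q : ℕ → ℝ[X]} {a h B : ℝ} {N : ℕ}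
    (hh : 0 < h) (hu : ContinuousOn u (Icc a (a + N * h)))
    (hq : ∀ j < N, ∀ x ∈ Ioo (a + j * h) (a + (j + 1) * h), uR x = (q j).eval x)
    (hsup : sSup ((fun x => |u x - uR x|) '' Ioo a (a + N * h)) ≤ B) {j : ℕ} (hj : j < N) :
    ∀ z ∈ Ioo (a + j * h) (a + (j + 1) * h), |u z - (q j).eval z| ≤ B := by
  -- `sSup` of a set of reals that is not bounded above is `0`: the bound on `sSup` says nothing
  -- until `|u - uR|` is shown to be bounded.
  have hbdd : BddAbove ((fun x => |u x - uR x|) '' Ioo a (a + N * h)) :=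
    bddAbove_abs_sub_image ((isCompact_Icc.image_of_continuousOn hu).isBounded.subset
      (image_mono Ioo_subset_Icc_self)) (isBounded_image_of_eqOn_polynomial hh hq)
  intro z hz
  have hjN : (j : ℝ) + 1 ≤ N := by exact_mod_cast hj
  have hz' : z ∈ Ioo a (a + N * h) :=
    ⟨by nlinarith [hz.1, (j.cast_nonneg : (0 : ℝ) ≤ j)], by nlinarith [hz.2]⟩
  rw [← hq j hj z hz]
  exact (le_csSup hbdd ⟨z, hz', rfl⟩).trans hsup

theorem abs_jump_le_of_contDiffOn {p k : ℕ} {u : ℝ → ℝ} {qₗ qᵣ : ℝ[X]} {a b x h K M : ℝ}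
    (hh : 0 < h) (hK : 0 ≤ K) (hu : ContDiffOn ℝ (p + 1) u (Icc a b))
    (hM : ∀ y ∈ Icc a b, |iteratedDerivWithin (p + 1) u (Icc a b) y| ≤ M)
    (hsub : Icc (x - h) (x + h) ⊆ Icc a b) (hqₗ : qₗ.natDegree ≤ p) (hqᵣ : qᵣ.natDegree ≤ p)
    (hεₗ : ∀ z ∈ Ioo (x - h) x, |u z - qₗ.eval z| ≤ K * h ^ (p + 1))
    (hεᵣ : ∀ z ∈ Ioo x (x + h), |u z - qᵣ.eval z| ≤ K * h ^ (p + 1)) (hk : k ≤ p) :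
    |(derivative^[k] qᵣ).eval x - (derivative^[k] qₗ).eval x| ≤
      2 * derivAtZeroBound p * (1 + 2 ^ (p + 1) / p !) * (K + M) * h ^ (p + 1 - k) := by
  obtain ⟨T, hT, hTu⟩ := exists_polynomial_abs_sub_le_of_contDiffOn hu hM (by linarith) hsub
  have hjump := pow_mul_abs_jump_le hh hqₗ hqᵣ hT hεₗ hεᵣ
    (fun z hz => hTu z (Ioo_subset_Icc_self hz)) hk
  have hpow : h ^ (p + 1) = h ^ k * h ^ (p + 1 - k) := by rw [← pow_add]; congr 1; omega
  rw [show x + h - (x - h) = 2 * h by ring, mul_pow, hpow] at hjump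
  refine le_of_mul_le_mul_left (hjump.trans ?_) (pow_pos hh k)
  have hM0 : 0 ≤ M := (abs_nonneg _).trans (hM _ (hsub (left_mem_Icc.2 (by linarith))))
  have hw : 0 ≤ 2 ^ (p + 1) / (p ! : ℝ) := by positivity
  have hC := one_le_derivAtZeroBound p
  calc 2 * derivAtZeroBound p * (K * (h ^ k * h ^ (p + 1 - k)) +
        M * (2 ^ (p + 1) * (h ^ k * h ^ (p + 1 - k))) / p !)
      = 2 * derivAtZeroBound p * (h ^ k * h ^ (p + 1 - k)) * (K + 2 ^ (p + 1) / p ! * M) := by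
        ring
    _ ≤ 2 * derivAtZeroBound p * (h ^ k * h ^ (p + 1 - k)) *
          ((1 + 2 ^ (p + 1) / p !) * (K + M)) := by
        gcongr
        nlinarith
    _ = _ := by ring

/-- smallness of derivative jumps under optimal L∞ convergence: if
`‖u - u^R‖_{L^∞(a,b)} ≤ K h^{p+1}` for a piecewise polynomial `u^R` of degree ≤ p and a
`C^{p+1}` function `u`, then the jump `J^k_i` of the k-th derivative of `u^R` at each
interior node satisfies `|J^k_i| ≤ c (K + sup_{[a,b]}|u^{(p+1)}|) h^{p+1-k}`. -/
theorem jumps_small_of_optimal_Linfty (p : ℕ) :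
    ∃ c : ℝ, 0 < c ∧
      ∀ (a b : ℝ), a < b → ∀ N : ℕ, 0 < N → ∀ h : ℝ, h = (b - a) / N →
      ∀ u : ℝ → ℝ, ContDiffOn ℝ (p+1) u (Set.Icc a b) →
      ∀ (uR : ℝ → ℝ) (q : ℕ → Polynomial ℝ),
        (∀ i < N, (q i).natDegree ≤ p) →
        (∀ i < N, ∀ x ∈ Set.Ioo (a + i*h) (a + (i+1)*h), uR x = (q i).eval x) →
        ∀ K : ℝ, 0 ≤ K →
          sSup ((fun x => |u x - uR x|) '' Set.Ioo a b) ≤ K * h^(p+1) →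
          ∀ i ∈ Finset.Ico 1 N, ∀ k ≤ p,
            |(Polynomial.derivative^[k] (q i)).eval (a + i*h) -
             (Polynomial.derivative^[k] (q (i-1))).eval (a + i*h)| ≤
              c * (K + sSup ((fun x =>
                  |iteratedDerivWithin (p+1) u (Set.Icc a b) x|) '' Set.Icc a b)) *
                h^(p+1-k) := by
  refine ⟨2 * derivAtZeroBound p * (1 + 2 ^ (p + 1) / p !),
    by have := one_le_derivAtZeroBound p; positivity, ?_⟩
  intro a b hab N hN h hh u hu uR q hdeg hq K hK hsup i hi k hk
  obtain ⟨hi1, hiN⟩ := Finset.mem_Ico.1 hi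
  have hh0 : 0 < h := hh ▸ div_pos (by linarith) (by exact_mod_cast hN)
  have hb : a + N * h = b := by rw [hh]; field_simp; ring
  have hM := fun y (hy : y ∈ Icc a b) => ContinuousOn.le_sSup_image_Icc
    ((hu.continuousOn_iteratedDerivWithin le_rfl (uniqueDiffOn_Icc hab)).abs) hy
  have hsub : Icc (a + i * h - h) (a + i * h + h) ⊆ Icc a b := by
    have hi1' : (1 : ℝ) ≤ i := by exact_mod_cast hi1
    have hiN' : (i : ℝ) + 1 ≤ N := by exact_mod_cast hiN
    exact Icc_subset_Icc (by nlinarith) (by nlinarith)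
  have hcell {j : ℕ} (hj : j < N) :=
    abs_sub_eval_le_of_sSup_le hh0 (hb ▸ hu.continuousOn) hq (hb ▸ hsup) hj
  refine abs_jump_le_of_contDiffOn hh0 hK hu hM hsub (hdeg _ (by omega)) (hdeg i hiN)
    (fun z hz => hcell (j := i - 1) (by omega) z ?_) (fun z hz => hcell hiN z ?_) hk
  · rwa [Nat.cast_sub hi1, Nat.cast_one, sub_add_cancel, sub_mul, one_mul, ← add_sub_assoc]
  · rwa [add_mul, one_mul, ← add_assoc]
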